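/- Let n′ ≥ 1 be odd and N = n′ + 2. Let λ = (λ_1, λ_2) be a regular highest weight for GL_2 and λ′ = (λ′_1, …, λ′_{n′}) a regular essentially self-dual highest weight for GL_{n′}; set μ = (λ_1, λ_2, λ′_1, …, λ′_{n′}) ∈ ℤ^N, w = w(λ) = λ_1 − λ_2 + 1, w′ = w(λ′), and let T = { S + S′ : S ∈ {0, w}, S′ ∈ {S_0(λ′), …, S_{n′−1}(λ′)} }. Assume 2t ≠ w + w′ for all t ∈ T, and set p(μ) = (w + w′) − max{ t ∈ T : 2t < w + w′ }. Then there exist a dominant weight μ̃ ∈ ℤ^N and a permutation σ ∈ S_N with ℓ(σ) = n′ such that σ·μ̃ = μ, if and only if (w + w′) − 2p(μ) + 2 − N ≤ (λ_1 + λ_2) − (λ′_1 + λ′_{n′}) ≤ 2p(μ) − (w + w′) − 2 − N. -/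

import Mathlib

/-!
Put `u = μ + ρ̃`. A pair `(μ̃, σ)` exists iff the entries of `u` are distinct and exactly `n′`
pairs `i < j` have `u_i < u_j`: then `σ` sorts `u` decreasingly, and `ℓ(σ)` counts those pairs.
Here `u_1 > u_2` and `u_3 > ⋯ > u_N`, so only the pairs `(1, j)` and `(2, j)` can count; with
`X = λ′_1 − λ_2 − 1` the condition reads: no partial sum `S′_s` equals `X` or `X − w`, and
`#{s | S′_s < X − w} + #{s | S′_s < X} = n′`. Self-duality makes the `S′_s` symmetric about
`w′/2`, which turns this into: each `S′_s` lies on the same side of `X` and of `w + w′ − X`.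
As `T` is symmetric about `(w + w′)/2`, that holds iff the largest `q ∈ T` below the midpoint is
smaller than both `X` and `w + w′ − X`; these are the two stated inequalities.
-/

/-- The length (number of inversions) of a permutation of `Fin N`:
`ℓ(σ) = #{ (i,j) : i < j and σ(i) > σ(j) }`. -/
def permLength {N : ℕ} (σ : Equiv.Perm (Fin N)) : ℕ :=
  (Finset.univ.filter (fun q : Fin N × Fin N => q.1 < q.2 ∧ σ q.2 < σ q.1)).card

/-- The half-sum of positive roots of `GL_N`, `ρ̃_i = (N + 1 − 2i)/2` in 1-based
indexing, i.e. `ρ̃_i = (N − 1)/2 − i` in 0-based indexing (`N` odd). -/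
def rhoGL (N : ℕ) : Fin N → ℤ := fun i => ((N : ℤ) - 1) / 2 - (i : ℤ)

open Finset Function Equiv

section Ascents

variable {α : Type*} [LinearOrder α] {n : ℕ}

def ascents (u : Fin n → α) : Finset (Fin n × Fin n) :=
  {q | q.1 < q.2 ∧ u q.1 < u q.2}

lemma permLength_inv (σ : Perm (Fin n)) : permLength σ⁻¹ = permLength σ :=
  card_equiv ((Equiv.prodComm _ _).trans (σ⁻¹.prodCongr σ⁻¹)) fun q => by
    simp [and_comm]

lemma permLength_eq_card_ascents {v : Fin n → α} (hv : StrictAnti v) (σ : Perm (Fin n)) :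
    permLength σ = #(ascents (v ∘ ⇑σ⁻¹)) := by
  rw [← permLength_inv, permLength, ascents]
  congr! 3 with q
  simp [hv.lt_iff_gt]

lemma exists_strictAnti_comp_iff (u : Fin n → α) (k : ℕ) :
    (∃ (v : Fin n → α) (σ : Perm (Fin n)), StrictAnti v ∧ permLength σ = k ∧ v ∘ ⇑σ⁻¹ = u) ↔
      Injective u ∧ #(ascents u) = k := by
  constructor
  · rintro ⟨v, σ, hv, rfl, rfl⟩
    exact ⟨hv.injective.comp σ⁻¹.injective, (permLength_eq_card_ascents hv σ).symm⟩
  · rintro ⟨hu, rfl⟩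
    set τ := Tuple.sort (OrderDual.toDual ∘ u)
    have hsort : StrictAnti (u ∘ τ) :=
      (Tuple.monotone_sort (OrderDual.toDual ∘ u)).dual_right.strictAnti_of_injective
        (hu.comp τ.injective)
    have hcomp : (u ∘ τ) ∘ ⇑τ⁻¹ = u := by ext; simp
    exact ⟨u ∘ τ, τ, hsort, by rw [permLength_eq_card_ascents hsort, hcomp], hcomp⟩

lemma card_ascents_cons (a : α) (f : Fin n → α) :
    #(ascents (Fin.cons a f : Fin (n + 1) → α)) = #{j | a < f j} + #(ascents f) := by
  simp only [ascents, card_filter, Fintype.sum_prod_type, Fin.sum_univ_succ]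
  simp [Fin.succ_pos, Fin.succ_lt_succ_iff]

lemma ascents_eq_empty {f : Fin n → α} (hf : Antitone f) : ascents f = ∅ := by
  ext q
  simpa [ascents] using fun h => hf h.le

end Ascents

section ConsCons

variable {α : Type*} [LinearOrder α] {n : ℕ} {a b : α} {c : Fin n → α}

lemma injective_cons_cons_iff (hba : b < a) (hc : StrictAnti c) :
    Injective (Fin.cons a (Fin.cons b c) : Fin (n + 2) → α) ↔ (∀ s, c s ≠ a) ∧ ∀ s, c s ≠ b := by
  simp only [Fin.cons_injective_iff, Set.mem_range, Fin.exists_fin_succ, Fin.cons_zero,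
    Fin.cons_succ, hba.ne, hc.injective, and_true, not_or, not_exists, not_false_eq_true,
    true_and, ne_eq]

lemma card_ascents_cons_cons (hba : b < a) (hc : Antitone c) :
    #(ascents (Fin.cons a (Fin.cons b c) : Fin (n + 2) → α)) = #{s | a < c s} + #{s | b < c s} := by
  rw [card_ascents_cons, card_ascents_cons, ascents_eq_empty hc, Fin.card_filter_univ_succ']
  simp [hba.not_gt]

end ConsCons

lemma antitone_iff_strictAnti_add_rhoGL {N : ℕ} (m : Fin N → ℤ) :
    Antitone m ↔ StrictAnti (m + rhoGL N) := by
  rcases N with _ | N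
  · exact iff_of_true (fun i => i.elim0) (fun i => i.elim0)
  rw [Fin.antitone_iff_succ_le, Fin.strictAnti_iff_succ_lt]
  refine forall_congr' fun i => ?_
  simp only [Pi.add_apply, rhoGL, Fin.val_succ, Fin.val_castSucc]
  omega

lemma exists_antitone_dot_eq_iff {N : ℕ} (μ : Fin N → ℤ) (k : ℕ) :
    (∃ (m : Fin N → ℤ) (σ : Perm (Fin N)), (∀ i j, i ≤ j → m j ≤ m i) ∧ permLength σ = k ∧
        ∀ i, m (σ⁻¹ i) + rhoGL N (σ⁻¹ i) - rhoGL N i = μ i) ↔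
      Injective (μ + rhoGL N) ∧ #(ascents (μ + rhoGL N)) = k := by
  rw [← exists_strictAnti_comp_iff]
  constructor
  · rintro ⟨m, σ, hm, hk, hμ⟩
    refine ⟨m + rhoGL N, σ, (antitone_iff_strictAnti_add_rhoGL m).1 hm, hk, funext fun i => ?_⟩
    simp [← hμ i]
  · rintro ⟨v, σ, hv, hk, hμ⟩
    refine ⟨v - rhoGL N, σ, (antitone_iff_strictAnti_add_rhoGL _).2 (by simpa using hv), hk,
      fun i => ?_⟩
    have hμi := congrFun hμ i
    simp only [comp_apply, Pi.add_apply] at hμi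
    simp only [Pi.sub_apply, sub_add_cancel, hμi, add_sub_cancel_right]

section SameSide

variable {ι α : Type*} [Fintype ι] [LinearOrder α] (S : ι → α)

lemma lt_iff_lt_of_card_filter_lt_eq {X Y : α} (h : #{i | S i < X} = #{i | S i < Y}) (i : ι) :
    S i < X ↔ S i < Y := by
  wlog hXY : X ≤ Y generalizing X Y
  · exact (this h.symm (le_of_not_ge hXY)).symm
  have hsub : univ.filter (fun i => S i < X) ⊆ univ.filter (fun i => S i < Y) := fun i => by
    simpa using fun hi => hi.trans_le hXY
  simpa using Finset.ext_iff.1 (eq_of_subset_of_card_le hsub h.ge) i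

lemma forall_lt_or_lt_iff_card (X Y : α) :
    (∀ i, (S i < X ∧ S i < Y) ∨ (X < S i ∧ Y < S i)) ↔
      (∀ i, S i ≠ Y) ∧ (∀ i, S i ≠ X) ∧ #{i | Y < S i} + #{i | S i < X} = Fintype.card ι := by
  have hsplit : #{i | Y < S i} + #{i | ¬ Y < S i} = Fintype.card ι :=
    card_filter_add_card_filter_not _
  constructor
  · intro h
    have hX : ∀ i, ¬ Y < S i ↔ S i < X := fun i => by
      rcases h i with h | h
      exacts [iff_of_true (not_lt.2 h.2.le) h.1, iff_of_false (not_not.2 h.2) h.1.not_gt]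
    refine ⟨fun i => ?_, fun i => ?_, by simpa only [hX] using hsplit⟩
    · rcases h i with h | h
      exacts [h.2.ne, h.2.ne']
    · rcases h i with h | h
      exacts [h.1.ne, h.1.ne']
  · rintro ⟨hY, hX, hcard⟩ i
    have hY' : ∀ i, ¬ Y < S i ↔ S i < Y := fun i => not_lt.trans (hY i).le_iff_lt
    have hXY := lt_iff_lt_of_card_filter_lt_eq S (X := X) (Y := Y) (by
      simp only [hY'] at hsplit; omega) i
    rcases (hX i).lt_or_gt with h | h
    · exact Or.inl ⟨h, hXY.1 h⟩
    · exact Or.inr ⟨h, (not_lt.1 (mt hXY.2 h.not_gt)).lt_of_ne' (hY i)⟩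

end SameSide

section Palindromic

variable {n : ℕ} {S : Fin n → ℤ} {c : ℤ}

lemma card_filter_lt_eq_card_filter_sub_lt (hS : ∀ s, S s + S s.rev = c) (x : ℤ) :
    #{s | S s < x} = #{s | c - x < S s} :=
  card_equiv Fin.revPerm fun s => by
    simp only [mem_filter, mem_univ, true_and, Fin.revPerm_apply]
    have := hS s
    omega

variable {w : ℤ} {T : Finset ℤ} {q : ℤ}

lemma forall_lt_or_lt_iff_isGreatest (hS : ∀ s, S s + S s.rev = c)
    (hT : ∀ t, t ∈ T ↔ ∃ s, t = S s ∨ t = w + S s) (hmid : ∀ t ∈ T, 2 * t ≠ w + c)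
    (hq : IsGreatest {t | t ∈ T ∧ 2 * t < w + c} q) (X : ℤ) :
    (∀ s, (S s < X ∧ S s < w + c - X) ∨ (X < S s ∧ w + c - X < S s)) ↔
      q < X ∧ q < w + c - X := by
  have hST : ∀ s, S s ∈ T := fun s => (hT _).2 ⟨s, Or.inl rfl⟩
  have hwST : ∀ s, w + S s ∈ T := fun s => (hT _).2 ⟨s, Or.inr rfl⟩
  constructor
  · intro h
    obtain ⟨s, rfl | rfl⟩ := (hT q).1 hq.1.1
    · have := hq.1.2
      have := h s
      omega
    · have := hq.1.2
      have := h s.rev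
      have := hS s
      omega
  · rintro ⟨hX, hY⟩ s
    have hs := fun h => hq.2 ⟨hST s, h⟩
    have hs' := fun h => hq.2 ⟨hwST s.rev, h⟩
    have := hmid _ (hST s)
    have := hS s
    omega

lemma card_filter_lt_add_card_filter_lt_eq_iff (hS : ∀ s, S s + S s.rev = c)
    (hT : ∀ t, t ∈ T ↔ ∃ s, t = S s ∨ t = w + S s) (hmid : ∀ t ∈ T, 2 * t ≠ w + c)
    (hq : IsGreatest {t | t ∈ T ∧ 2 * t < w + c} q) (X : ℤ) :
    ((∀ s, S s ≠ X - w) ∧ (∀ s, S s ≠ X) ∧ #{s | S s < X - w} + #{s | S s < X} = n) ↔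
      q < X ∧ q < w + c - X := by
  have hrev : (∀ s, S s ≠ X - w) ↔ ∀ s, S s ≠ w + c - X :=
    ⟨fun h s hs => h s.rev (by have := hS s; omega),
      fun h s hs => h s.rev (by have := hS s; omega)⟩
  rw [← forall_lt_or_lt_iff_isGreatest hS hT hmid hq, forall_lt_or_lt_iff_card, Fintype.card_fin,
    hrev, card_filter_lt_eq_card_filter_sub_lt hS (X - w), sub_sub_eq_add_sub, add_comm c w]

end Palindromic

section PartialSum

def partialSum (f : ℕ → ℤ) (s : ℕ) : ℤ :=
  ∑ i ∈ Icc 1 s, (f i - f (i + 1) + 1)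

lemma partialSum_eq (f : ℕ → ℤ) (s : ℕ) : partialSum f s = f 1 - f (s + 1) + s := by
  induction s with
  | zero => simp [partialSum]
  | succ s ih =>
    rw [partialSum, sum_Icc_succ_top (by omega), ← partialSum, ih]
    push_cast
    ring

variable {f : ℕ → ℤ} {n : ℕ}

lemma strictMonoOn_partialSum (hf : ∀ i, 1 ≤ i → i < n → f (i + 1) ≤ f i) :
    StrictMonoOn (partialSum f) (Set.Iio n) := by
  have hanti : AntitoneOn f (Set.Icc 1 n) :=
    antitoneOn_of_succ_le Set.ordConnected_Icc fun i _ hi hi' =>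
      hf i hi.1 (by simpa using hi'.2)
  intro s hs t ht hst
  rw [Set.mem_Iio] at hs ht
  have := hanti ⟨by omega, by omega⟩ ⟨by omega, by omega⟩ (by omega : s + 1 ≤ t + 1)
  simp only [partialSum_eq]
  omega

lemma apply_succ_add_apply_sub_eq
    (hf : ∀ i, 1 ≤ i → i ≤ n - 1 → f i - f (i + 1) + 1 = f (n - i) - f (n - i + 1) + 1) :
    ∀ s ≤ n - 1, f (s + 1) + f (n - s) = f 1 + f n := by
  intro s hs
  induction s with
  | zero => simp
  | succ s ih =>
    have := hf (s + 1) (by omega) (by omega)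
    rw [show n - (s + 1) + 1 = n - s by omega] at this
    have := ih (by omega)
    omega

lemma partialSum_add_partialSum_rev
    (hf : ∀ i, 1 ≤ i → i ≤ n - 1 → f i - f (i + 1) + 1 = f (n - i) - f (n - i + 1) + 1)
    (s : Fin n) : partialSum f s + partialSum f s.rev = partialSum f (n - 1) := by
  have := s.isLt
  have := apply_succ_add_apply_sub_eq hf s (by omega)
  simp only [partialSum_eq, Fin.val_rev]
  rw [show n - (s + 1) + 1 = n - s by omega, Nat.sub_add_cancel (by omega : 1 ≤ n)]
  omega

lemma mem_image₂_add_image_range_iff (w t : ℤ) :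
    t ∈ image₂ (· + ·) ({0, w} : Finset ℤ) ((range n).image (partialSum f)) ↔
      ∃ s : Fin n, t = partialSum f s ∨ t = w + partialSum f s := by
  simp only [mem_image₂, mem_image, mem_range, mem_insert, mem_singleton]
  constructor
  · rintro ⟨a, rfl | rfl, b, ⟨s, hs, rfl⟩, rfl⟩
    exacts [⟨⟨s, hs⟩, Or.inl (zero_add _)⟩, ⟨⟨s, hs⟩, Or.inr rfl⟩]
  · rintro ⟨s, rfl | rfl⟩
    exacts [⟨0, Or.inl rfl, _, ⟨s, s.isLt, rfl⟩, zero_add _⟩,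
      ⟨w, Or.inr rfl, _, ⟨s, s.isLt, rfl⟩, rfl⟩]

end PartialSum

section Weight

variable {n : ℕ} {l1 l2 : ℤ} {lam : ℕ → ℤ} {mu : Fin (n + 2) → ℤ}

lemma add_rhoGL_eq_cons
    (hmu : ∀ i : Fin (n + 2), mu i =
      if (i : ℕ) = 0 then l1 else if (i : ℕ) = 1 then l2 else lam ((i : ℕ) - 1)) :
    mu + rhoGL (n + 2) = Fin.cons (l1 + rhoGL (n + 2) 0) (Fin.cons (l2 + rhoGL (n + 2) 0 - 1)
      fun s : Fin n => lam 1 + rhoGL (n + 2) 0 - 2 - partialSum lam s) := by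
  ext i
  refine Fin.cases ?_ (Fin.cases ?_ fun s => ?_) i <;> simp [hmu, rhoGL, partialSum_eq] <;> omega

lemma injective_and_card_ascents_add_rhoGL_iff (hl : l2 ≤ l1)
    (hlam : ∀ i, 1 ≤ i → i < n → lam (i + 1) ≤ lam i)
    (hmu : ∀ i : Fin (n + 2), mu i =
      if (i : ℕ) = 0 then l1 else if (i : ℕ) = 1 then l2 else lam ((i : ℕ) - 1)) (k : ℕ) :
    Injective (mu + rhoGL (n + 2)) ∧ #(ascents (mu + rhoGL (n + 2))) = k ↔
      (∀ s : Fin n, partialSum lam s ≠ lam 1 - l1 - 2) ∧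
      (∀ s : Fin n, partialSum lam s ≠ lam 1 - l2 - 1) ∧
      #{s : Fin n | partialSum lam s < lam 1 - l1 - 2} +
        #{s : Fin n | partialSum lam s < lam 1 - l2 - 1} = k := by
  rw [add_rhoGL_eq_cons hmu]
  set K := rhoGL (n + 2) 0
  set c : Fin n → ℤ := fun s => lam 1 + K - 2 - partialSum lam s
  have hc : StrictAnti c := fun s t hst => by
    have := strictMonoOn_partialSum hlam s.isLt t.isLt hst
    simp only [c]
    omega
  have e1 : ∀ s, c s ≠ l1 + K ↔ partialSum lam s ≠ lam 1 - l1 - 2 := fun s => by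
    simp only [c]; omega
  have e2 : ∀ s, c s ≠ l2 + K - 1 ↔ partialSum lam s ≠ lam 1 - l2 - 1 := fun s => by
    simp only [c]; omega
  have e3 : ∀ s, l1 + K < c s ↔ partialSum lam s < lam 1 - l1 - 2 := fun s => by
    simp only [c]; omega
  have e4 : ∀ s, l2 + K - 1 < c s ↔ partialSum lam s < lam 1 - l2 - 1 := fun s => by
    simp only [c]; omega
  rw [injective_cons_cons_iff (by omega) hc, card_ascents_cons_cons (by omega) hc.antitone,
    and_assoc]
  simp only [e1, e2, e3, e4]

end Weight

theorem stmt_11_general (n' : ℕ) (hn' : 1 ≤ n') (N : ℕ) (hN : N = n' + 2)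
    (l1 l2 : ℤ) (hl : l2 ≤ l1)
    (lam' : ℕ → ℤ)
    (hmono' : ∀ i, 1 ≤ i → i < n' → lam' (i + 1) ≤ lam' i)
    (hsd' : ∀ i, 1 ≤ i → i ≤ n' - 1 →
      lam' i - lam' (i + 1) + 1 = lam' (n' - i) - lam' (n' - i + 1) + 1)
    (mu : Fin N → ℤ)
    (hmu : ∀ i : Fin N, mu i =
      if (i : ℕ) = 0 then l1 else if (i : ℕ) = 1 then l2 else lam' ((i : ℕ) - 1))
    (w w' : ℤ) (hw : w = l1 - l2 + 1)
    (hw' : w' = ∑ i ∈ Finset.Icc 1 (n' - 1), (lam' i - lam' (i + 1) + 1))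
    (T : Finset ℤ)
    (hT : T = Finset.image₂ (· + ·) ({0, w} : Finset ℤ)
      ((Finset.range n').image
        (fun s => ∑ i ∈ Finset.Icc 1 s, (lam' i - lam' (i + 1) + 1))))
    (hmid : ∀ t ∈ T, 2 * t ≠ w + w')
    (q : ℤ) (hq : IsGreatest {t : ℤ | t ∈ T ∧ 2 * t < w + w'} q)
    (p : ℤ) (hp : p = w + w' - q) :
    (∃ (muTilde : Fin N → ℤ) (σ : Equiv.Perm (Fin N)),
      (∀ i j : Fin N, i ≤ j → muTilde j ≤ muTilde i)
      ∧ permLength σ = n'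
      ∧ (∀ i : Fin N, (muTilde (σ⁻¹ i) + rhoGL N (σ⁻¹ i)) - rhoGL N i = mu i))
    ↔ ((w + w') - 2 * p + 2 - (N : ℤ) ≤ (l1 + l2) - (lam' 1 + lam' n')
        ∧ (l1 + l2) - (lam' 1 + lam' n') ≤ 2 * p - (w + w') - 2 - (N : ℤ)) := by
  change w' = partialSum lam' (n' - 1) at hw'
  change T = image₂ _ _ ((range n').image (partialSum lam')) at hT
  subst hN hw hp hw' hT
  have hw' := partialSum_eq lam' (n' - 1)
  rw [Nat.sub_add_cancel hn'] at hw'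
  rw [exists_antitone_dot_eq_iff, injective_and_card_ascents_add_rhoGL_iff hl hmono' hmu,
    show lam' 1 - l1 - 2 = (lam' 1 - l2 - 1) - (l1 - l2 + 1) by ring,
    card_filter_lt_add_card_filter_lt_eq_iff (S := fun s : Fin n' => partialSum lam' s)
      (partialSum_add_partialSum_rev hsd') (mem_image₂_add_image_range_iff _) hmid hq]
  push_cast
  omega

/-- Combinatorial Lemma for `n = 2`: Let `n′ ≥ 1` be odd, `N = n′ + 2`,
let `λ = (λ_1, λ_2)` be a regular highest weight for `GL_2` and `λ′` a regular
essentially self-dual highest weight for `GL_{n′}`; set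
`μ = (λ_1, λ_2, λ′_1, …, λ′_{n′}) ∈ ℤ^N`, `w = λ_1 − λ_2 + 1`, `w′ = w(λ′)`, and
`T = { S + S′ : S ∈ {0, w}, S′ ∈ {S_0(λ′), …, S_{n′−1}(λ′)} }`. Assume `2t ≠ w + w′`
for all `t ∈ T`, and set `p(μ) = (w + w′) − max{ t ∈ T : 2t < w + w′ }`. Then there
exist a dominant (nonincreasing) weight `μ̃ ∈ ℤ^N` and a permutation `σ ∈ S_N` with
`ℓ(σ) = n′` such that the Kostant dot action gives `σ·μ̃ = σ(μ̃ + ρ̃) − ρ̃ = μ`, if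
and only if
`(w + w′) − 2p(μ) + 2 − N ≤ (λ_1 + λ_2) − (λ′_1 + λ′_{n′}) ≤ 2p(μ) − (w + w′) − 2 − N`. -/
theorem stmt_11 (n' : ℕ) (hn' : 1 ≤ n') (hodd : Odd n') (N : ℕ) (hN : N = n' + 2)
    (l1 l2 : ℤ) (hl : l2 ≤ l1) (hlreg : 2 ≤ l1 - l2 + 1)
    (lam' : ℕ → ℤ)
    (hmono' : ∀ i, 1 ≤ i → i < n' → lam' (i + 1) ≤ lam' i)
    (hreg' : ∀ i, 1 ≤ i → i ≤ n' - 1 → 2 ≤ lam' i - lam' (i + 1) + 1)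
    (hsd' : ∀ i, 1 ≤ i → i ≤ n' - 1 →
      lam' i - lam' (i + 1) + 1 = lam' (n' - i) - lam' (n' - i + 1) + 1)
    (mu : Fin N → ℤ)
    (hmu : ∀ i : Fin N, mu i =
      if (i : ℕ) = 0 then l1 else if (i : ℕ) = 1 then l2 else lam' ((i : ℕ) - 1))
    (w w' : ℤ) (hw : w = l1 - l2 + 1)
    (hw' : w' = ∑ i ∈ Finset.Icc 1 (n' - 1), (lam' i - lam' (i + 1) + 1))
    (T : Finset ℤ)
    (hT : T = Finset.image₂ (· + ·) ({0, w} : Finset ℤ)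
      ((Finset.range n').image
        (fun s => ∑ i ∈ Finset.Icc 1 s, (lam' i - lam' (i + 1) + 1))))
    (hmid : ∀ t ∈ T, 2 * t ≠ w + w')
    (q : ℤ) (hq : IsGreatest {t : ℤ | t ∈ T ∧ 2 * t < w + w'} q)
    (p : ℤ) (hp : p = w + w' - q) :
    (∃ (muTilde : Fin N → ℤ) (σ : Equiv.Perm (Fin N)),
      (∀ i j : Fin N, i ≤ j → muTilde j ≤ muTilde i)
      ∧ permLength σ = n'
      ∧ (∀ i : Fin N, (muTilde (σ⁻¹ i) + rhoGL N (σ⁻¹ i)) - rhoGL N i = mu i))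
    ↔ ((w + w') - 2 * p + 2 - (N : ℤ) ≤ (l1 + l2) - (lam' 1 + lam' n')
        ∧ (l1 + l2) - (lam' 1 + lam' n') ≤ 2 * p - (w + w') - 2 - (N : ℤ)) :=
  stmt_11_general n' hn' N hN l1 l2 hl lam' hmono' hsd' mu hmu w w' hw hw' T hT hmid q hq p hp
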